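/- If x, μ ∈ S^{d-1} satisfy arccos(xᵀμ) > 1/(log κ)² for κ large, then the vMF log-density satisfies log(c_d(κ) e^{κ xᵀμ}) ≤ log κ − κ/(4 (log κ)^4) for all sufficiently large κ. -/

import Mathlib

/-!
Away from `μ` the exponent drops by a definite amount: `arccos ⟪x, μ⟫ > ε` forces
`⟪x, μ⟫ ≤ cos ε ≤ 1 - ε² / 3`. The normalizing constant loses at most a power of `κ` against
`e^{-κ}`, because the single term of index `⌊κ / 2⌋` in the series for `I_r(κ)` is, by Stirling,
of size `e^κ / poly(κ)`. With `ε = (log κ)⁻²` the gain `κ / (3 (log κ)⁴)` in the exponent then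
swallows every `O(log κ)` error.
-/

open scoped RealInnerProductSpace BigOperators ENNReal NNReal Classical
open MeasureTheory Filter Real ProbabilityTheory Asymptotics

/-- Modified Bessel function of the first kind of order `r`. -/
noncomputable def besselI (r z : ℝ) : ℝ :=
  ∑' m : ℕ, (z / 2) ^ (2 * (m : ℝ) + r) / ((Nat.factorial m) * Real.Gamma ((m : ℝ) + r + 1))

/-- Normalizing constant of the `d`-dimensional von Mises-Fisher density. -/
noncomputable def vmfConst (d : ℕ) (κ : ℝ) : ℝ :=
  κ ^ ((d : ℝ) / 2 - 1) / ((2 * Real.pi) ^ ((d : ℝ) / 2) * besselI ((d : ℝ) / 2 - 1) κ)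

/-- von Mises-Fisher density with mean direction `μ` and concentration `κ`. -/
noncomputable def vmfDensity (d : ℕ) (μ x : EuclideanSpace ℝ (Fin d)) (κ : ℝ) : ℝ :=
  vmfConst d κ * Real.exp (κ * ⟪μ, x⟫)

/-- The unit sphere `S^{d-1}` in `ℝ^d`. -/
abbrev Sph (d : ℕ) := Metric.sphere (0 : EuclideanSpace ℝ (Fin d)) 1

/-- Open geodesic ball of radius `r` centered at `μ` on the unit sphere. -/
noncomputable def gBall {d : ℕ} (μ : Sph d) (r : ℝ) : Set (Sph d) :=
  {y | Real.arccos ⟪(μ : EuclideanSpace ℝ (Fin d)), (y : EuclideanSpace ℝ (Fin d))⟫ < r}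

/-- Surface measure on the unit sphere, realized as `(d-1)`-dimensional Hausdorff measure. -/
noncomputable def sphMeasure (d : ℕ) : Measure (Sph d) := μH[(d : ℝ) - 1]

/-- The constant `A₂ = 2^{d-1} · 2π^{(d-1)/2} / Γ((d-1)/2)`. -/
noncomputable def A2val (d : ℕ) : ℝ :=
  2 ^ (d - 1) * (2 * Real.pi ^ (((d : ℝ) - 1) / 2) / Real.Gamma (((d : ℝ) - 1) / 2))

open scoped Nat

lemma cos_le_one_sub_sq_div_three {x : ℝ} (hx : |x| ≤ 1) : cos x ≤ 1 - x ^ 2 / 3 := by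
  have h := (abs_le.mp (cos_bound hx)).2
  have hx4 : |x| ^ 4 ≤ x ^ 2 := by
    rw [← sq_abs x]; exact pow_le_pow_of_le_one (abs_nonneg x) hx (by norm_num)
  nlinarith [sq_nonneg x]

lemma le_one_sub_sq_div_three_of_lt_arccos {t ε : ℝ} (hε₀ : 0 ≤ ε) (hε₁ : ε ≤ 1)
    (h : ε < arccos t) : t ≤ 1 - ε ^ 2 / 3 := by
  have hcos : t ≤ cos ε := by
    by_contra! hlt
    have := arccos_le_arccos hlt.le
    rw [arccos_cos hε₀ (by linarith [pi_gt_three])] at this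
    linarith
  exact hcos.trans (cos_le_one_sub_sq_div_three (abs_le.mpr ⟨by linarith, hε₁⟩))

lemma factorial_le_exp_one_mul_sqrt_mul_pow {n : ℕ} (hn : n ≠ 0) :
    (n ! : ℝ) ≤ exp 1 * √n * (n / exp 1) ^ n := by
  obtain ⟨k, rfl⟩ := Nat.exists_eq_succ_of_ne_zero hn
  have h := Stirling.stirlingSeq'_antitone (Nat.zero_le k)
  simp only [Function.comp] at h
  rw [Stirling.stirlingSeq_one, Stirling.stirlingSeq, div_le_iff₀ (by positivity),
    Real.sqrt_mul zero_le_two] at h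
  exact h.trans_eq (by field_simp)

lemma exp_two_mul_mul_factorial_sq_le {n : ℕ} (hn : n ≠ 0) :
    exp (2 * n) * (n ! : ℝ) ^ 2 ≤ exp 2 * n * n ^ (2 * n) := by
  have h := pow_le_pow_left₀ (Nat.cast_nonneg _) (factorial_le_exp_one_mul_sqrt_mul_pow hn) 2
  have he : exp (2 * n) = exp 1 ^ (2 * n) := by rw [← exp_nat_mul]; push_cast; ring_nf
  calc exp (2 * n) * (n ! : ℝ) ^ 2 ≤ exp 1 ^ (2 * n) * (exp 1 * √n * (n / exp 1) ^ n) ^ 2 := by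
        rw [he]; gcongr
    _ = exp 2 * n * n ^ (2 * n) := by
        have he2 : exp 2 = exp 1 ^ 2 := by rw [← exp_nat_mul]; norm_num
        rw [mul_pow, mul_pow, Real.sq_sqrt (Nat.cast_nonneg _), ← pow_mul, div_pow, he2]
        field_simp
        ring

lemma Gamma_add_one_le_factorial_mul_pow {m n : ℕ} {r : ℝ} (h : 1 ≤ m + r) (hrn : r ≤ n) :
    Gamma (m + r + 1) ≤ m ! * (m + n) ^ n := by
  calc Gamma (m + r + 1) ≤ Gamma ((m + n : ℕ) + 1) := by
        refine Real.Gamma_strictMonoOn_Ici.monotoneOn ?_ ?_ ?_ <;> simp <;> linarith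
    _ = (m ! * (m + 1).ascFactorial n : ℕ) := by
        rw [Real.Gamma_nat_eq_factorial, Nat.factorial_mul_ascFactorial]
    _ ≤ m ! * (m + n) ^ n := by
        exact_mod_cast Nat.mul_le_mul_left _ (Nat.ascFactorial_le_pow_add m n)

noncomputable def besselITerm (r z : ℝ) (m : ℕ) : ℝ :=
  (z / 2) ^ (2 * (m : ℝ) + r) / (m ! * Gamma (m + r + 1))

lemma besselITerm_nonneg {r z : ℝ} {m : ℕ} (hz : 0 ≤ z) (h : 0 ≤ m + r + 1) :
    0 ≤ besselITerm r z m := by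
  have := Real.Gamma_nonneg_of_nonneg h
  unfold besselITerm
  positivity

lemma besselITerm_le {r z : ℝ} {m : ℕ} (hz : 0 < z) (h : 1 ≤ m + r) :
    besselITerm r z m ≤ (z / 2) ^ r * ((z / 2) ^ 2) ^ m / m ! := by
  have hΓ : 1 ≤ Gamma (m + r + 1) := by
    rw [← Real.Gamma_two]
    refine Real.Gamma_strictMonoOn_Ici.monotoneOn ?_ ?_ ?_ <;> simp <;> linarith
  have hpow : (z / 2) ^ (2 * (m : ℝ) + r) = (z / 2) ^ r * ((z / 2) ^ 2) ^ m := by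
    rw [Real.rpow_add (by positivity), ← pow_mul, ← Real.rpow_natCast, mul_comm]
    push_cast; ring_nf
  unfold besselITerm
  rw [hpow]
  exact div_le_div_of_nonneg_left (by positivity) (by positivity)
    (le_mul_of_one_le_right (by positivity) hΓ)

lemma summable_besselITerm (r : ℝ) {z : ℝ} (hz : 0 < z) : Summable (besselITerm r z) := by
  refine ((Real.summable_pow_div_factorial ((z / 2) ^ 2)).mul_left ((z / 2) ^ r))
    |>.of_norm_bounded_eventually_nat ?_
  filter_upwards [eventually_ge_atTop ⌈1 - r⌉₊] with m hm
  have h : 1 ≤ m + r := by linarith [(Nat.ceil_le.mp hm)]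
  rw [Real.norm_of_nonneg (besselITerm_nonneg hz.le (by linarith)), ← mul_div_assoc]
  exact besselITerm_le hz h

lemma besselI_pos {r z : ℝ} (hr : -1 ≤ r) (hz : 0 < z) : 0 < besselI r z := by
  have hΓ : 0 < Gamma (1 + r + 1) := Real.Gamma_pos_of_pos (by linarith)
  refine (summable_besselITerm r hz).tsum_pos
    (fun m ↦ besselITerm_nonneg hz.le (by linarith [m.cast_nonneg (α := ℝ)])) 1 ?_
  unfold besselITerm
  push_cast
  positivity

lemma vmfConst_pos (d : ℕ) {κ : ℝ} (hκ : 0 < κ) : 0 < vmfConst d κ := by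
  have := besselI_pos (r := (d : ℝ) / 2 - 1) (by linarith [d.cast_nonneg (α := ℝ)]) hκ
  unfold vmfConst
  positivity

theorem exp_div_le_besselI {r κ : ℝ} {n : ℕ} (hr : 0 ≤ r) (hrn : r ≤ n) (hκ : 2 ≤ κ)
    (hnκ : 2 * n ≤ κ) : exp κ / (exp 4 * κ ^ (n + 1)) ≤ besselI r κ := by
  set M := ⌊κ / 2⌋₊
  have hM₁ : (M : ℝ) ≤ κ / 2 := Nat.floor_le (by linarith)
  have hM₂ : κ / 2 < M + 1 := Nat.lt_floor_add_one _
  have hM : 1 ≤ M := Nat.le_floor (by push_cast; linarith)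
  have hM' : (1 : ℝ) ≤ M := by exact_mod_cast hM
  have hΓ : 0 < Gamma (M + r + 1) := Real.Gamma_pos_of_pos (by positivity)
  have hnum : (M : ℝ) ^ (2 * M) ≤ (κ / 2) ^ (2 * (M : ℝ) + r) := by
    have h2M : 2 * (M : ℝ) = (2 * M : ℕ) := by push_cast; ring
    rw [Real.rpow_add (by positivity), h2M, Real.rpow_natCast]
    calc (M : ℝ) ^ (2 * M) ≤ (κ / 2) ^ (2 * M) := by gcongr
      _ ≤ (κ / 2) ^ (2 * M) * (κ / 2) ^ r := le_mul_of_one_le_right (by positivity)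
          (Real.one_le_rpow (by linarith) hr)
  have hden : (M ! : ℝ) * Gamma (M + r + 1) ≤ (M ! : ℝ) ^ 2 * κ ^ n := by
    calc (M ! : ℝ) * Gamma (M + r + 1) ≤ M ! * (M ! * (M + n) ^ n) := by
          gcongr; exact Gamma_add_one_le_factorial_mul_pow (by linarith) hrn
      _ ≤ (M ! : ℝ) ^ 2 * κ ^ n := by rw [← mul_assoc, ← sq]; gcongr; linarith
  have hexp : exp κ ≤ exp 2 * exp (2 * M) := by rw [← exp_add]; gcongr; linarith
  have he4 : exp 4 = exp 2 * exp 2 := by rw [← exp_add]; norm_num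
  refine le_trans ?_ ((summable_besselITerm r (by linarith)).le_tsum M
    fun m _ ↦ besselITerm_nonneg (by linarith) (by positivity))
  rw [besselITerm, div_le_div_iff₀ (by positivity) (by positivity)]
  calc exp κ * (M ! * Gamma (M + r + 1))
      ≤ exp 2 * exp (2 * M) * ((M ! : ℝ) ^ 2 * κ ^ n) := by gcongr
    _ = exp 2 * κ ^ n * (exp (2 * M) * (M ! : ℝ) ^ 2) := by ring
    _ ≤ exp 2 * κ ^ n * (exp 2 * M * M ^ (2 * M)) := by
        have := exp_two_mul_mul_factorial_sq_le (Nat.one_le_iff_ne_zero.mp hM)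
        exact mul_le_mul_of_nonneg_left this (by positivity)
    _ ≤ M ^ (2 * M) * (exp 4 * κ ^ (n + 1)) := by
        rw [he4, pow_succ]
        have : (M : ℝ) ≤ κ := by linarith
        have : 0 ≤ exp 2 * exp 2 * κ ^ n * (M : ℝ) ^ (2 * M) := by positivity
        nlinarith
    _ ≤ (κ / 2) ^ (2 * (M : ℝ) + r) * (exp 4 * κ ^ (n + 1)) := by gcongr

lemma log_vmfConst_le {d : ℕ} (hd : 2 ≤ d) {κ : ℝ} (hκ : 2 * d ≤ κ) :
    log (vmfConst d κ) ≤ 2 * d * log κ + 4 - κ := by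
  have hd' : (2 : ℝ) ≤ d := by exact_mod_cast hd
  have hκ₀ : 0 < κ := by linarith
  have hlogκ : 0 ≤ log κ := log_nonneg (by linarith)
  have hI := exp_div_le_besselI (r := d / 2 - 1) (n := d) (by linarith) (by linarith)
    (by linarith) hκ
  have hlogI : κ - 4 - (d + 1) * log κ ≤ log (besselI (d / 2 - 1) κ) := by
    have := log_le_log (by positivity) hI
    rw [log_div (by positivity) (by positivity), log_exp, log_mul (by positivity) (by positivity),
      log_exp, log_pow, Nat.cast_add, Nat.cast_one] at this
    linarith
  have h2π : 0 ≤ log (2 * π) := log_nonneg (by linarith [pi_gt_three])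
  have hI₀ := besselI_pos (r := d / 2 - 1) (by linarith) hκ₀
  rw [vmfConst, log_div (by positivity) (by positivity), log_mul (by positivity) (by positivity),
    log_rpow hκ₀, log_rpow (by positivity)]
  nlinarith

lemma eventually_mul_log_pow_le (c : ℝ) (k : ℕ) : ∀ᶠ x in atTop, c * log x ^ k ≤ x := by
  filter_upwards [((isLittleO_pow_log_id_atTop (n := k)).const_mul_left c).bound one_pos,
    eventually_ge_atTop 0] with x hx hx₀
  rw [one_mul, id, Real.norm_of_nonneg hx₀] at hx
  exact (Real.le_norm_self _).trans hx

/-- away from the mean direction, the vMF log-density is at most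
`log κ - κ/(4 (log κ)^4)` for large `κ`. -/
theorem vmf_logdensity_bound (d : ℕ) (hd : 2 ≤ d) :
    ∃ κ0 : ℝ, ∀ κ ≥ κ0, ∀ x μ : EuclideanSpace ℝ (Fin d), ‖x‖ = 1 → ‖μ‖ = 1 →
      1 / Real.log κ ^ 2 < Real.arccos ⟪x, μ⟫ →
      Real.log (vmfConst d κ * Real.exp (κ * ⟪x, μ⟫)) ≤
        Real.log κ - κ / (4 * Real.log κ ^ 4) := by
  obtain ⟨κ0, hκ0⟩ := eventually_atTop.mp <| (eventually_ge_atTop (2 * d : ℝ)).and <|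
    (eventually_mul_log_pow_le (12 * (2 * d + 3)) 5).and (tendsto_log_atTop.eventually_ge_atTop 1)
  refine ⟨κ0, fun κ hκ x μ _ _ hangle ↦ ?_⟩
  obtain ⟨hdκ, hlog5, hlog1⟩ := hκ0 κ hκ
  have hκ₀ : 0 < κ := by linarith [show (2 : ℝ) ≤ d by exact_mod_cast hd]
  set L := log κ
  have hinner := le_one_sub_sq_div_three_of_lt_arccos (by positivity)
    (div_le_one_of_le₀ (by nlinarith) (by positivity)) hangle
  have hgap : κ * ⟪x, μ⟫ ≤ κ - κ / (3 * L ^ 4) := by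
    calc κ * ⟪x, μ⟫ ≤ κ * (1 - (1 / L ^ 2) ^ 2 / 3) := by gcongr
      _ = κ - κ / (3 * L ^ 4) := by field_simp
  have hpoly : (2 * d + 3) * L ≤ κ / (12 * L ^ 4) := by
    rw [le_div_iff₀ (by positivity)]; linarith
  rw [log_mul (vmfConst_pos d hκ₀).ne' (exp_pos _).ne', log_exp]
  have hc := log_vmfConst_le hd hdκ
  have : κ / (3 * L ^ 4) = κ / (4 * L ^ 4) + κ / (12 * L ^ 4) := by field_simp; ring
  nlinarith
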